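/- arXiv:2306.03651 — 4 statements merged into one kernel-verified Lean document; each statement's English description precedes it below -/
import Mathlib

section
/- Fix a sample H = (h_1,…,h_m) of m hyper-edges and integers t ≥ 1, k ≥ 1. Then the following chain of inequalities holds: ERA(F_k,H) ≤ E_σ[ ÃMC(F_k,H,σ) ] ≤ k · ERA(F_1,H) ≤ k · ERA(F_k,H), where the expectation is over a matrix σ ∈ {−1,1}^{t×m} of i.i.d. Rademacher random variables. -/
open Finset

open scoped Classical

/-- `fS S h = 1` if `S ∩ h ≠ ∅`, `0` otherwise. -/
noncomputable def fS {V : Type*} [DecidableEq V] (S h : Finset V) : ℝ :=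
  if (S ∩ h).Nonempty then 1 else 0

/-- The family of all subsets of `V` of cardinality at most `k`. -/
def kSets (V : Type*) [Fintype V] [DecidableEq V] (k : ℕ) : Finset (Finset V) :=
  Finset.univ.filter (fun S : Finset V => S.card ≤ k)

lemma kSets_ne (V : Type*) [Fintype V] [DecidableEq V] (k : ℕ) :
    (kSets V k).Nonempty := ⟨∅, by simp [kSets]⟩

/-- Empirical Rademacher average `ERA(F_j, H)` of the family
`F_j = {f_S : S ⊆ V, |S| ≤ j}` on the sample `H = (h_1, …, h_m)`. -/
noncomputable def ERA (V : Type*) [Fintype V] [DecidableEq V]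
    (k m : ℕ) (H : Fin m → Finset V) : ℝ :=
  (∑ σ : Fin m → Bool,
      (kSets V k).sup' (kSets_ne V k)
        (fun S => (∑ s, (if σ s then (1 : ℝ) else -1) * fS S (H s)) / m))
    / 2 ^ m

/-- Approximate Monte Carlo empirical Rademacher average `ÃMC(F_k, H, σ)`. -/
noncomputable def AMC (V : Type*) [Fintype V] [DecidableEq V]
    (k t m : ℕ) (H : Fin m → Finset V) (σ : Fin t → Fin m → Bool) : ℝ :=
  (∑ j : Fin t,
      (kSets V k).sup' (kSets_ne V k)
        (fun S => (∑ u ∈ S, ∑ s, (if σ j s then (1 : ℝ) else -1) * fS {u} (H s)) / m))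
    / t


lemma two_point_aux {ι : Type*} (T : Finset ι) (hT : T.Nonempty) (C x y : ι → ℝ)
    (h : ∀ i ∈ T, ∀ j ∈ T, y i - y j ≤ |x i - x j|) :
    T.sup' hT (fun i => y i + C i) + T.sup' hT (fun i => -y i + C i) ≤
      T.sup' hT (fun i => x i + C i) + T.sup' hT (fun i => -x i + C i) := by
  obtain ⟨i, hi, hie⟩ := Finset.exists_mem_eq_sup' hT (fun i => y i + C i)
  obtain ⟨j, hj, hje⟩ := Finset.exists_mem_eq_sup' hT (fun i => -y i + C i)
  rw [hie, hje]
  have hxy := h i hi j hj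
  have h1 : x i + C i ≤ T.sup' hT (fun i => x i + C i) := Finset.le_sup' (fun i => x i + C i) hi
  have h2 : -x j + C j ≤ T.sup' hT (fun i => -x i + C i) := Finset.le_sup' (fun i => -x i + C i) hj
  have h3 : -x i + C i ≤ T.sup' hT (fun i => -x i + C i) := Finset.le_sup' (fun i => -x i + C i) hi
  have h4 : x j + C j ≤ T.sup' hT (fun i => x i + C i) := Finset.le_sup' (fun i => x i + C i) hj
  rcases abs_cases (x i - x j) with ⟨he, _⟩ | ⟨he, _⟩ <;> rw [he] at hxy <;> linarith

lemma step_aux {ι : Type*} {m : ℕ} (T : Finset ι) (hT : T.Nonempty)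
    (b c : ι → Fin m → ℝ) (s₀ : Fin m)
    (heq : ∀ i, ∀ s, s ≠ s₀ → b i s = c i s)
    (h : ∀ i ∈ T, ∀ j ∈ T, b i s₀ - b j s₀ ≤ |c i s₀ - c j s₀|) :
    (∑ τ : Fin m → Bool, T.sup' hT fun i => ∑ s, (if τ s then (1:ℝ) else -1) * b i s) ≤
      ∑ τ : Fin m → Bool, T.sup' hT fun i => ∑ s, (if τ s then (1:ℝ) else -1) * c i s := by
  classical
  set flip : (Fin m → Bool) → (Fin m → Bool) := fun τ => Function.update τ s₀ (!τ s₀) with hflipdef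
  have hflip_apply : ∀ τ s, flip τ s = if s = s₀ then !τ s₀ else τ s := by
    intro τ s; simp [flip, Function.update_apply]
  have hinv : Function.Involutive flip := by
    intro τ; funext s
    by_cases hss : s = s₀ <;> simp [hflip_apply, hss]
  have hdec : ∀ (d : ι → Fin m → ℝ) (τ : Fin m → Bool) (i : ι),
      ∑ s, (if τ s then (1:ℝ) else -1) * d i s
        = (if τ s₀ then (1:ℝ) else -1) * d i s₀ +
          ∑ s ∈ Finset.univ.erase s₀, (if τ s then (1:ℝ) else -1) * d i s :=
    fun d τ i => (Finset.add_sum_erase _ _ (Finset.mem_univ s₀)).symm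
  have pair : ∀ τ : Fin m → Bool,
      (T.sup' hT fun i => ∑ s, (if τ s then (1:ℝ) else -1) * b i s) +
        (T.sup' hT fun i => ∑ s, (if flip τ s then (1:ℝ) else -1) * b i s) ≤
      (T.sup' hT fun i => ∑ s, (if τ s then (1:ℝ) else -1) * c i s) +
        (T.sup' hT fun i => ∑ s, (if flip τ s then (1:ℝ) else -1) * c i s) := by
    intro τ
    set C : ι → ℝ := fun i => ∑ s ∈ Finset.univ.erase s₀,
        (if τ s then (1:ℝ) else -1) * c i s with hCdef
    have e1 : (fun i => ∑ s, (if τ s then (1:ℝ) else -1) * b i s)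
        = fun i => (if τ s₀ then (1:ℝ) else -1) * b i s₀ + C i := by
      funext i; rw [hdec]; congr 1
      exact Finset.sum_congr rfl fun s hs => by rw [heq i s (Finset.mem_erase.mp hs).1]
    have e2 : (fun i => ∑ s, (if flip τ s then (1:ℝ) else -1) * b i s)
        = fun i => (if !τ s₀ then (1:ℝ) else -1) * b i s₀ + C i := by
      funext i; rw [hdec]; congr 1
      · rw [hflip_apply]; simp
      · exact Finset.sum_congr rfl fun s hs => by
          rw [hflip_apply, if_neg (Finset.mem_erase.mp hs).1,
            heq i s (Finset.mem_erase.mp hs).1]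
    have e3 : (fun i => ∑ s, (if τ s then (1:ℝ) else -1) * c i s)
        = fun i => (if τ s₀ then (1:ℝ) else -1) * c i s₀ + C i := by
      funext i; rw [hdec]
    have e4 : (fun i => ∑ s, (if flip τ s then (1:ℝ) else -1) * c i s)
        = fun i => (if !τ s₀ then (1:ℝ) else -1) * c i s₀ + C i := by
      funext i; rw [hdec]; congr 1
      · rw [hflip_apply]; simp
      · exact Finset.sum_congr rfl fun s hs => by
          rw [hflip_apply, if_neg (Finset.mem_erase.mp hs).1]
    rw [e1, e2, e3, e4]
    have key := two_point_aux T hT C (fun i => c i s₀) (fun i => b i s₀) h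
    cases hb : τ s₀ <;>
      simp only [hb, Bool.not_false, Bool.not_true, Bool.false_eq_true, Bool.true_eq_false,
        if_true, if_false, ite_true, ite_false, one_mul, neg_one_mul] <;>
      linarith
  have hsum := Finset.sum_le_sum (fun τ (_ : τ ∈ (Finset.univ : Finset (Fin m → Bool))) => pair τ)
  rw [Finset.sum_add_distrib, Finset.sum_add_distrib] at hsum
  have hreb : (∑ τ : Fin m → Bool,
        T.sup' hT fun i => ∑ s, (if flip τ s then (1:ℝ) else -1) * b i s)
      = ∑ τ : Fin m → Bool, T.sup' hT fun i => ∑ s, (if τ s then (1:ℝ) else -1) * b i s :=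
    hinv.bijective.sum_comp (fun τ => T.sup' hT fun i => ∑ s, (if τ s then (1:ℝ) else -1) * b i s)
  have hrec : (∑ τ : Fin m → Bool,
        T.sup' hT fun i => ∑ s, (if flip τ s then (1:ℝ) else -1) * c i s)
      = ∑ τ : Fin m → Bool, T.sup' hT fun i => ∑ s, (if τ s then (1:ℝ) else -1) * c i s :=
    hinv.bijective.sum_comp (fun τ => T.sup' hT fun i => ∑ s, (if τ s then (1:ℝ) else -1) * c i s)
  rw [hreb, hrec] at hsum
  linarith

lemma contraction_aux {ι : Type*} {m : ℕ} (T : Finset ι) (hT : T.Nonempty)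
    (a y : ι → Fin m → ℝ)
    (h : ∀ s : Fin m, ∀ i ∈ T, ∀ j ∈ T, y i s - y j s ≤ |a i s - a j s|) :
    (∑ τ : Fin m → Bool, T.sup' hT fun i => ∑ s, (if τ s then (1:ℝ) else -1) * y i s) ≤
      ∑ τ : Fin m → Bool, T.sup' hT fun i => ∑ s, (if τ s then (1:ℝ) else -1) * a i s := by
  classical
  have key : ∀ A : Finset (Fin m),
      (∑ τ : Fin m → Bool, T.sup' hT fun i =>
          ∑ s, (if τ s then (1:ℝ) else -1) * (if s ∈ A then y i s else a i s)) ≤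
        ∑ τ : Fin m → Bool, T.sup' hT fun i => ∑ s, (if τ s then (1:ℝ) else -1) * a i s := by
    intro A
    induction A using Finset.induction_on with
    | empty => simp
    | @insert s₀ A hs₀ ih =>
      refine le_trans (step_aux T hT _ _ s₀ ?_ ?_) ih
      · intro i s hs; simp [Finset.mem_insert, hs]
      · intro i hi j hj
        simpa [hs₀] using h s₀ i hi j hj
  have := key Finset.univ
  simpa using this

lemma sum_comp_proj {X : Type*} [Fintype X] {t : ℕ} (j : Fin t) (G : X → ℝ) :
    ∑ σ : Fin t → X, G (σ j) = (Fintype.card X : ℝ) ^ (t - 1) * ∑ x, G x := by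
  classical
  have he := Equiv.sum_comp (Equiv.funSplitAt j X).symm (fun σ : Fin t → X => G (σ j))
  rw [← he, Fintype.sum_prod_type]
  have happ : ∀ (x : X) (g : {i : Fin t // i ≠ j} → X),
      (Equiv.funSplitAt j X).symm (x, g) j = x := by
    intro x g
    simp [Equiv.funSplitAt, Equiv.piSplitAt]
  simp only [happ]
  rw [Finset.sum_congr rfl (fun x _ => Finset.sum_const (G x))]
  have hcard : Fintype.card ({i : Fin t // i ≠ j} → X) = Fintype.card X ^ (t - 1) := by
    rw [Fintype.card_fun]
    congr 1
    rw [Fintype.card_subtype_compl, Fintype.card_subtype_eq, Fintype.card_fin]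
  simp only [Finset.card_univ, hcard, nsmul_eq_mul, Nat.cast_pow]
  rw [Finset.mul_sum]

set_option maxHeartbeats 2000000 in
/-- `ERA(F_k,H) ≤ E_σ[ÃMC(F_k,H,σ)] ≤ k·ERA(F_1,H) ≤ k·ERA(F_k,H)`, where the
expectation is over a uniform random matrix `σ ∈ {−1,1}^{t×m}` of i.i.d.
Rademacher variables. -/
theorem era_le_expected_amc_le_k_era (V : Type*) [Fintype V] [DecidableEq V]
    (k t m : ℕ) (hk : 1 ≤ k) (ht : 1 ≤ t) (hm : 1 ≤ m)
    (H : Fin m → Finset V) :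
    ERA V k m H ≤
        (∑ σ : Fin t → Fin m → Bool, AMC V k t m H σ) /
          (Fintype.card (Fin t → Fin m → Bool) : ℝ) ∧
      (∑ σ : Fin t → Fin m → Bool, AMC V k t m H σ) /
          (Fintype.card (Fin t → Fin m → Bool) : ℝ) ≤ k * ERA V 1 m H ∧
      (k : ℝ) * ERA V 1 m H ≤ k * ERA V k m H := by
  classical
  have hm' : (0:ℝ) < (m:ℝ) := by exact_mod_cast hm
  have ht' : (0:ℝ) < (t:ℝ) := by exact_mod_cast ht
  have hmem : ∀ {j : ℕ} (S : Finset V), S.card ≤ j → S ∈ kSets V j := by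
    intro j S hS; simp [kSets, hS]
  have hcard_of_mem : ∀ {j : ℕ} {S : Finset V}, S ∈ kSets V j → S.card ≤ j := by
    intro j S hS; simpa [kSets] using hS
  have hfs_single : ∀ (u : V) (h' : Finset V), fS {u} h' = if u ∈ h' then (1:ℝ) else 0 := by
    intro u h'; unfold fS
    by_cases hu : u ∈ h' <;>
      simp [Finset.singleton_inter_of_mem, Finset.singleton_inter_of_notMem, hu]
  have hsum_card : ∀ (S h' : Finset V), ∑ u ∈ S, fS {u} h' = ((S ∩ h').card : ℝ) := by
    intro S h'
    simp_rw [hfs_single]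
    rw [Finset.sum_ite_mem]
    simp
  -- rewriting inner functions of sup's
  have e1 : ∀ (j : ℕ) (τ : Fin m → Bool),
      (kSets V j).sup' (kSets_ne V j)
          (fun S => (∑ s, (if τ s then (1:ℝ) else -1) * fS S (H s)) / m)
        = (kSets V j).sup' (kSets_ne V j)
          (fun S => ∑ s, (if τ s then (1:ℝ) else -1) * (fS S (H s) / m)) := by
    intro j τ
    refine congrArg _ (funext fun S => ?_)
    rw [Finset.sum_div]
    simp_rw [mul_div_assoc]
  have e2 : ∀ τ : Fin m → Bool,
      (kSets V k).sup' (kSets_ne V k)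
          (fun S => (∑ u ∈ S, ∑ s, (if τ s then (1:ℝ) else -1) * fS {u} (H s)) / m)
        = (kSets V k).sup' (kSets_ne V k)
          (fun S => ∑ s, (if τ s then (1:ℝ) else -1) * (((S ∩ H s).card : ℝ) / m)) := by
    intro τ
    refine congrArg _ (funext fun S => ?_)
    rw [Finset.sum_comm]
    simp_rw [← Finset.mul_sum, hsum_card]
    rw [Finset.sum_div]
    simp_rw [mul_div_assoc]
  -- contraction : part 1 at the level of sums over τ
  have hcontr :
      (∑ τ : Fin m → Bool, (kSets V k).sup' (kSets_ne V k)
          (fun S => (∑ s, (if τ s then (1:ℝ) else -1) * fS S (H s)) / m))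
        ≤ ∑ τ : Fin m → Bool, (kSets V k).sup' (kSets_ne V k)
          (fun S => (∑ u ∈ S, ∑ s, (if τ s then (1:ℝ) else -1) * fS {u} (H s)) / m) := by
    calc (∑ τ : Fin m → Bool, (kSets V k).sup' (kSets_ne V k)
          (fun S => (∑ s, (if τ s then (1:ℝ) else -1) * fS S (H s)) / m))
        = ∑ τ : Fin m → Bool, (kSets V k).sup' (kSets_ne V k)
          (fun S => ∑ s, (if τ s then (1:ℝ) else -1) * (fS S (H s) / m)) :=
        Finset.sum_congr rfl fun τ _ => e1 k τ
      _ ≤ ∑ τ : Fin m → Bool, (kSets V k).sup' (kSets_ne V k)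
          (fun S => ∑ s, (if τ s then (1:ℝ) else -1) * (((S ∩ H s).card : ℝ) / m)) := by
        refine contraction_aux _ _ _ _ ?_
        intro s i _ j _
        rw [div_sub_div_same, div_sub_div_same, abs_div, abs_of_pos hm']
        have hnum : fS i (H s) - fS j (H s)
            ≤ |((i ∩ H s).card : ℝ) - ((j ∩ H s).card : ℝ)| := by
          have habs := abs_nonneg (((i ∩ H s).card : ℝ) - ((j ∩ H s).card : ℝ))
          unfold fS
          by_cases hj : (j ∩ H s).Nonempty
          · rw [if_pos hj]
            split <;> linarith
          · have hj0 : (j ∩ H s) = ∅ := Finset.not_nonempty_iff_eq_empty.mp hj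
            by_cases hi : (i ∩ H s).Nonempty
            · rw [if_pos hi, if_neg hj, hj0]
              have h1 : (1:ℝ) ≤ ((i ∩ H s).card : ℝ) := by
                exact_mod_cast Finset.card_pos.mpr hi
              simp only [Finset.card_empty, Nat.cast_zero, sub_zero]
              rw [abs_of_nonneg (by linarith)]
              linarith
            · rw [if_neg hi, if_neg hj]
              linarith
        gcongr
      _ = ∑ τ : Fin m → Bool, (kSets V k).sup' (kSets_ne V k)
          (fun S => (∑ u ∈ S, ∑ s, (if τ s then (1:ℝ) else -1) * fS {u} (H s)) / m) :=
        (Finset.sum_congr rfl fun τ _ => e2 τ).symm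
  -- part 2 : pointwise in τ
  have hB : ∀ τ : Fin m → Bool,
      (kSets V k).sup' (kSets_ne V k)
          (fun S => (∑ u ∈ S, ∑ s, (if τ s then (1:ℝ) else -1) * fS {u} (H s)) / m)
        ≤ (k:ℝ) * (kSets V 1).sup' (kSets_ne V 1)
          (fun S => (∑ s, (if τ s then (1:ℝ) else -1) * fS S (H s)) / m) := by
    intro τ
    set M := (kSets V 1).sup' (kSets_ne V 1)
      (fun S => (∑ s, (if τ s then (1:ℝ) else -1) * fS S (H s)) / m) with hMdef
    have h0 : (∅ : Finset V) ∈ kSets V 1 := hmem ∅ (by simp)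
    have hv : (∑ s, (if τ s then (1:ℝ) else -1) * fS ∅ (H s)) / m ≤ M :=
      Finset.le_sup' (fun S => (∑ s, (if τ s then (1:ℝ) else -1) * fS S (H s)) / m) h0
    have hM0 : 0 ≤ M := by
      have hz : (∑ s, (if τ s then (1:ℝ) else -1) * fS ∅ (H s)) / m = 0 := by
        simp [fS]
      linarith
    refine Finset.sup'_le _ _ (fun S hS => ?_)
    rw [Finset.sum_div]
    have hu : ∀ u ∈ S, (∑ s, (if τ s then (1:ℝ) else -1) * fS {u} (H s)) / m ≤ M :=
      fun u _ => Finset.le_sup'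
        (fun S => (∑ s, (if τ s then (1:ℝ) else -1) * fS S (H s)) / m)
        (hmem {u} (by simp))
    calc ∑ u ∈ S, (∑ s, (if τ s then (1:ℝ) else -1) * fS {u} (H s)) / m
        ≤ ∑ _u ∈ S, M := Finset.sum_le_sum hu
      _ = (S.card : ℝ) * M := by rw [Finset.sum_const, nsmul_eq_mul]
      _ ≤ (k:ℝ) * M := by
          have hSk : (S.card : ℝ) ≤ (k:ℝ) := by exact_mod_cast hcard_of_mem hS
          exact mul_le_mul_of_nonneg_right hSk hM0
  -- part 3 : pointwise in τ
  have hC : ∀ τ : Fin m → Bool,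
      (kSets V 1).sup' (kSets_ne V 1)
          (fun S => (∑ s, (if τ s then (1:ℝ) else -1) * fS S (H s)) / m)
        ≤ (kSets V k).sup' (kSets_ne V k)
          (fun S => (∑ s, (if τ s then (1:ℝ) else -1) * fS S (H s)) / m) := by
    intro τ
    refine Finset.sup'_le _ _ (fun S hS => ?_)
    exact Finset.le_sup' (fun S => (∑ s, (if τ s then (1:ℝ) else -1) * fS S (H s)) / m)
      (hmem S (le_trans (hcard_of_mem hS) hk))
  -- computing the expectation of AMC
  have hcardX : (Fintype.card (Fin m → Bool) : ℝ) = (2:ℝ)^m := by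
    rw [Fintype.card_fun, Fintype.card_fin, Fintype.card_bool]
    push_cast; ring
  have hproj : ∀ j : Fin t,
      (∑ σ : Fin t → Fin m → Bool, (kSets V k).sup' (kSets_ne V k)
          (fun S => (∑ u ∈ S, ∑ s, (if σ j s then (1:ℝ) else -1) * fS {u} (H s)) / m))
        = (Fintype.card (Fin m → Bool) : ℝ) ^ (t - 1) *
          ∑ τ : Fin m → Bool, (kSets V k).sup' (kSets_ne V k)
            (fun S => (∑ u ∈ S, ∑ s, (if τ s then (1:ℝ) else -1) * fS {u} (H s)) / m) := by
    intro j
    have h := sum_comp_proj j (fun τ : Fin m → Bool => (kSets V k).sup' (kSets_ne V k)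
      (fun S => (∑ u ∈ S, ∑ s, (if τ s then (1:ℝ) else -1) * fS {u} (H s)) / m))
    simpa using h
  have hAMC : (∑ σ : Fin t → Fin m → Bool, AMC V k t m H σ)
      = ((2:ℝ)^m)^(t-1) * ∑ τ : Fin m → Bool, (kSets V k).sup' (kSets_ne V k)
          (fun S => (∑ u ∈ S, ∑ s, (if τ s then (1:ℝ) else -1) * fS {u} (H s)) / m) := by
    unfold AMC
    rw [← Finset.sum_div, Finset.sum_comm]
    rw [Finset.sum_congr rfl (fun j (_ : j ∈ (Finset.univ : Finset (Fin t))) => hproj j)]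
    rw [Finset.sum_const, nsmul_eq_mul, Finset.card_univ, Fintype.card_fin, hcardX,
      mul_div_cancel_left₀ _ (ne_of_gt ht')]
  have hcardN : (Fintype.card (Fin t → Fin m → Bool) : ℝ) = ((2:ℝ)^m)^t := by
    rw [Fintype.card_fun, Fintype.card_fin]
    push_cast [hcardX]
    ring
  have hpow : ((2:ℝ)^m)^t = ((2:ℝ)^m)^(t-1) * (2:ℝ)^m := by
    rw [← pow_succ, Nat.sub_add_cancel ht]
  have hEA : (∑ σ : Fin t → Fin m → Bool, AMC V k t m H σ) /
      (Fintype.card (Fin t → Fin m → Bool) : ℝ)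
      = (∑ τ : Fin m → Bool, (kSets V k).sup' (kSets_ne V k)
          (fun S => (∑ u ∈ S, ∑ s, (if τ s then (1:ℝ) else -1) * fS {u} (H s)) / m)) / 2^m := by
    rw [hAMC, hcardN, hpow,
      mul_div_mul_left _ _ (ne_of_gt (by positivity : (0:ℝ) < ((2:ℝ)^m)^(t-1)))]
  have h2m : (0:ℝ) < 2^m := by positivity
  refine ⟨?_, ?_, ?_⟩
  · rw [hEA]
    unfold ERA
    gcongr
  · rw [hEA]
    unfold ERA
    rw [← mul_div_assoc]
    gcongr ?_ / _
    calc (∑ τ : Fin m → Bool, (kSets V k).sup' (kSets_ne V k)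
          (fun S => (∑ u ∈ S, ∑ s, (if τ s then (1:ℝ) else -1) * fS {u} (H s)) / m))
        ≤ ∑ τ : Fin m → Bool, (k:ℝ) * (kSets V 1).sup' (kSets_ne V 1)
          (fun S => (∑ s, (if τ s then (1:ℝ) else -1) * fS S (H s)) / m) :=
        Finset.sum_le_sum fun τ _ => hB τ
      _ = (k:ℝ) * ∑ τ : Fin m → Bool, (kSets V 1).sup' (kSets_ne V 1)
          (fun S => (∑ s, (if τ s then (1:ℝ) else -1) * fS S (H s)) / m) :=
        (Finset.mul_sum _ _ _).symm
  · unfold ERA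
    have hsum : (∑ τ : Fin m → Bool, (kSets V 1).sup' (kSets_ne V 1)
          (fun S => (∑ s, (if τ s then (1:ℝ) else -1) * fS S (H s)) / m))
        ≤ ∑ τ : Fin m → Bool, (kSets V k).sup' (kSets_ne V k)
          (fun S => (∑ s, (if τ s then (1:ℝ) else -1) * fS S (H s)) / m) :=
      Finset.sum_le_sum fun τ _ => hC τ
    gcongr
end

section
/- Let H = (h_1,…,h_m) be a sample of m hyper-edges drawn i.i.d. uniformly at random from 𝔥, and let δ ∈ (0,1). Then with probability at least 1 − δ over H the following holds: for every set S ⊆ V with |S| ≤ k satisfying C_H(S) ≥ (1 − 1/e) · max_{S' ⊆ V, |S'| ≤ k} C_H(S') (in particular for the output of the greedy cover algorithm), one has C(S*) ≤ C_H(S)/(1 − 1/e) + sqrt( (ln(1/δ)/m)² + 2·C_H(S)·ln(1/δ) / ((1 − 1/e)·m) ) + ln(1/δ)/m. -/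
open Finset

open scoped Classical

/-- Set centrality `C(S) = (1/|𝔥|) Σ_{h ∈ 𝔥} f_S(h)`. -/
noncomputable def centr {V : Type*} [DecidableEq V]
    (𝔥 : Finset (Finset V)) (S : Finset V) : ℝ :=
  (∑ h ∈ 𝔥, fS S h) / 𝔥.card

/-- Empirical centrality `C_H(S) = (1/m) Σ_{s=1}^m f_S(h_s)`. -/
noncomputable def empC {V : Type*} [DecidableEq V] {m : ℕ}
    (H : Fin m → Finset V) (S : Finset V) : ℝ :=
  (∑ s, fS S (H s)) / m

/-- The optimal set centrality `C(S*) = max_{S ⊆ V, |S| ≤ k} C(S)`. -/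
noncomputable def maxCentr (V : Type*) [Fintype V] [DecidableEq V]
    (𝔥 : Finset (Finset V)) (k : ℕ) : ℝ :=
  (kSets V k).sup' (kSets_ne V k) (centr 𝔥)

/-- The maximal empirical centrality `max_{S ⊆ V, |S| ≤ k} C_H(S)`. -/
noncomputable def maxEmp (V : Type*) [Fintype V] [DecidableEq V] {m : ℕ}
    (H : Fin m → Finset V) (k : ℕ) : ℝ :=
  (kSets V k).sup' (kSets_ne V k) (empC H)


lemma sum_fun_prod (α : Type*) [Fintype α] (m : ℕ) (f : α → ℝ) :
    ∑ H : Fin m → α, ∏ s, f (H s) = (∑ x, f x) ^ m := by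
  induction m with
  | zero => simp
  | succ n ih =>
    rw [← (Fin.consEquiv (fun _ => α)).sum_comp]
    simp only [Fintype.sum_prod_type, Fin.consEquiv_apply, Fin.prod_univ_succ,
      Fin.cons_zero, Fin.cons_succ]
    rw [pow_succ, ← ih, Finset.sum_comm, Finset.sum_mul]
    refine Finset.sum_congr rfl fun y _ => ?_
    rw [← Finset.sum_mul]
    ring

lemma exp_neg_le_aux (x : ℝ) (hx : 0 ≤ x) : Real.exp (-x) ≤ 1 - x + x^2/2 := by
  have h : MonotoneOn (fun t : ℝ => 1 - t + t^2/2 - Real.exp (-t)) (Set.Ici 0) := by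
    apply monotoneOn_of_deriv_nonneg (convex_Ici 0)
    · fun_prop
    · fun_prop
    · intro t ht
      have : HasDerivAt (fun t : ℝ => 1 - t + t^2/2 - Real.exp (-t))
          (0 - 1 + 2*t/2 - (Real.exp (-t) * (-1))) t := by
        apply HasDerivAt.sub
        · apply HasDerivAt.add
          · exact (hasDerivAt_const t 1).sub (hasDerivAt_id t)
          · simpa using ((hasDerivAt_pow 2 t).div_const 2)
        · exact (Real.hasDerivAt_exp (-t)).comp t ((hasDerivAt_id t).neg)
      rw [this.deriv]
      have ht' : (0:ℝ) < t := by simpa using ht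
      nlinarith [Real.add_one_le_exp (-t), Real.exp_pos (-t)]
  have h0 := h (Set.self_mem_Ici) (Set.mem_Ici.mpr hx) hx
  simp at h0
  linarith

lemma chernoff_count (α : Type*) [Fintype α] (m : ℕ) (g : α → ℝ)
    (hg : ∀ x, g x = 0 ∨ g x = 1) (μ ε : ℝ)
    (hμdef : (∑ x, g x) = (Fintype.card α : ℝ) * μ)
    (hμ : 0 < μ) (hε : 0 ≤ ε) :
    ((Finset.univ.filter
        (fun H : Fin m → α => ∑ s, g (H s) ≤ m*(μ - ε))).card : ℝ)
      ≤ (Fintype.card α : ℝ)^m * Real.exp (-(m*ε^2/(2*μ))) := by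
  set N : ℝ := (Fintype.card α : ℝ) with hN
  have hN0 : 0 ≤ N := by positivity
  set l : ℝ := ε/μ with hl
  have hl0 : 0 ≤ l := div_nonneg hε hμ.le
  set a : ℝ := m*(μ - ε) with ha
  have step1 : ((Finset.univ.filter
        (fun H : Fin m → α => ∑ s, g (H s) ≤ a)).card : ℝ)
      ≤ ∑ H : Fin m → α, Real.exp (l * (a - ∑ s, g (H s))) := by
    rw [Finset.card_eq_sum_ones]
    push_cast
    calc (∑ H ∈ Finset.univ.filter (fun H : Fin m → α => ∑ s, g (H s) ≤ a), (1:ℝ))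
        ≤ ∑ H ∈ Finset.univ.filter (fun H : Fin m → α => ∑ s, g (H s) ≤ a),
            Real.exp (l * (a - ∑ s, g (H s))) := by
          apply Finset.sum_le_sum
          intro H hH
          rw [Finset.mem_filter] at hH
          exact Real.one_le_exp (by nlinarith [hH.2])
      _ ≤ ∑ H : Fin m → α, Real.exp (l * (a - ∑ s, g (H s))) :=
          Finset.sum_le_sum_of_subset_of_nonneg (Finset.filter_subset _ _)
            (fun _ _ _ => (Real.exp_pos _).le)
  have step2 : ∑ H : Fin m → α, Real.exp (l * (a - ∑ s, g (H s)))
      = Real.exp (l*a) * (∑ x, Real.exp (-(l * g x)))^m := by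
    rw [← sum_fun_prod, Finset.mul_sum]
    refine Finset.sum_congr rfl fun H _ => ?_
    rw [← Real.exp_sum, ← Real.exp_add]
    congr 1
    rw [Finset.sum_neg_distrib, ← Finset.mul_sum]
    ring
  have step3 : (∑ x, Real.exp (-(l * g x))) = N - (N*μ)*(1 - Real.exp (-l)) := by
    have : ∀ x, Real.exp (-(l * g x)) = 1 - g x * (1 - Real.exp (-l)) := by
      intro x
      rcases hg x with h | h <;> simp [h]
    simp_rw [this]
    rw [Finset.sum_sub_distrib, ← Finset.sum_mul, hμdef]
    simp [hN, mul_comm]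
  have step45 : N - (N*μ)*(1 - Real.exp (-l)) ≤ N * Real.exp (-(μ*(l - l^2/2))) := by
    have h1 : l - l^2/2 ≤ 1 - Real.exp (-l) := by
      have := exp_neg_le_aux l hl0; linarith
    have h2 : N - (N*μ)*(1 - Real.exp (-l)) ≤ N - (N*μ)*(l - l^2/2) := by
      have : 0 ≤ N*μ := by positivity
      nlinarith
    have h3 : N * (1 - μ*(l - l^2/2)) ≤ N * Real.exp (-(μ*(l - l^2/2))) := by
      apply mul_le_mul_of_nonneg_left _ hN0
      have := Real.add_one_le_exp (-(μ*(l - l^2/2)))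
      linarith
    nlinarith
  have hsum_nonneg : 0 ≤ ∑ x, Real.exp (-(l * g x)) :=
    Finset.sum_nonneg fun _ _ => (Real.exp_pos _).le
  have step6 : (∑ x, Real.exp (-(l * g x)))^m ≤ (N * Real.exp (-(μ*(l - l^2/2))))^m := by
    apply pow_le_pow_left₀ hsum_nonneg
    rw [step3]; exact step45
  have key : Real.exp (l*a) * (N * Real.exp (-(μ*(l - l^2/2))))^m
      = N^m * Real.exp (-(m*ε^2/(2*μ))) := by
    rw [mul_pow, ← Real.exp_nat_mul, mul_left_comm, ← Real.exp_add]
    congr 2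
    rw [hl, ha]
    field_simp
    ring
  calc ((Finset.univ.filter
        (fun H : Fin m → α => ∑ s, g (H s) ≤ m*(μ - ε))).card : ℝ)
      ≤ ∑ H : Fin m → α, Real.exp (l * (a - ∑ s, g (H s))) := step1
    _ = Real.exp (l*a) * (∑ x, Real.exp (-(l * g x)))^m := step2
    _ ≤ Real.exp (l*a) * (N * Real.exp (-(μ*(l - l^2/2))))^m := by
        apply mul_le_mul_of_nonneg_left step6 (Real.exp_pos _).le
    _ = N^m * Real.exp (-(m*ε^2/(2*μ))) := key

lemma quad_bound (μ c β : ℝ) (hc : 0 ≤ c) (hβ : 0 ≤ β)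
    (h : μ ≤ c + Real.sqrt (2*μ*β)) :
    μ ≤ c + β + Real.sqrt (β^2 + 2*c*β) := by
  by_cases hμ : μ ≤ c + β
  · have := Real.sqrt_nonneg (β^2 + 2*c*β); linarith
  push_neg at hμ
  have hμ0 : 0 ≤ μ := by linarith
  have h2 : (μ - c)^2 ≤ 2*μ*β := by
    have hmc : 0 ≤ μ - c := by linarith
    have hs := Real.sq_sqrt (show 0 ≤ 2*μ*β by positivity)
    nlinarith [Real.sqrt_nonneg (2*μ*β)]
  have hs2 : Real.sqrt (β^2+2*c*β) ^ 2 = β^2+2*c*β := Real.sq_sqrt (by positivity)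
  nlinarith [Real.sqrt_nonneg (β^2+2*c*β), hs2, h2]

lemma fS_nonneg {V : Type*} [DecidableEq V] (S h : Finset V) : 0 ≤ fS S h := by
  unfold fS; split <;> norm_num

lemma fS_zero_or_one {V : Type*} [DecidableEq V] (S h : Finset V) :
    fS S h = 0 ∨ fS S h = 1 := by
  unfold fS; split
  · right; rfl
  · left; rfl

lemma empC_nonneg {V : Type*} [DecidableEq V] {m : ℕ} (H : Fin m → Finset V)
    (S : Finset V) : 0 ≤ empC H S := by
  unfold empC
  apply div_nonneg _ (Nat.cast_nonneg m)
  exact Finset.sum_nonneg fun _ _ => fS_nonneg _ _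

/-- With probability at least `1 − δ` over a sample `H` of `m` hyper-edges drawn
i.i.d. uniformly from `𝔥`: every `S ⊆ V` with `|S| ≤ k` and
`C_H(S) ≥ (1 − 1/e)·max_{|S'| ≤ k} C_H(S')` satisfies
`C(S*) ≤ C_H(S)/(1 − 1/e) + sqrt((ln(1/δ)/m)² + 2 C_H(S) ln(1/δ)/((1 − 1/e) m)) + ln(1/δ)/m`. -/
theorem optimum_upper_bound (V : Type*) [Fintype V] [DecidableEq V]
    (𝔥 : Finset (Finset V)) (h𝔥 : 𝔥.Nonempty)
    (k m : ℕ) (hk : 1 ≤ k) (hm : 1 ≤ m)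
    (δ : ℝ) (hδ0 : 0 < δ) (hδ1 : δ < 1) :
    1 - δ ≤
      (((Finset.univ.filter (fun H : Fin m → {h : Finset V // h ∈ 𝔥} =>
            ∀ S ∈ kSets V k,
              (1 - 1 / Real.exp 1) * maxEmp V (fun s => (H s : Finset V)) k ≤
                  empC (fun s => (H s : Finset V)) S →
                maxCentr V 𝔥 k ≤
                  empC (fun s => (H s : Finset V)) S / (1 - 1 / Real.exp 1) +
                  Real.sqrt ((Real.log (1 / δ) / m) ^ 2 +
                    2 * empC (fun s => (H s : Finset V)) S * Real.log (1 / δ) /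
                      ((1 - 1 / Real.exp 1) * m)) +
                  Real.log (1 / δ) / m)).card : ℝ)
        / (Fintype.card (Fin m → {h : Finset V // h ∈ 𝔥}) : ℝ)) := by
  have he1pos : 0 < 1 - 1 / Real.exp 1 := by
    have h1 : 1 < Real.exp 1 := by
      have := Real.exp_one_gt_d9; linarith
    have : 1 / Real.exp 1 < 1 := by
      rw [div_lt_one (Real.exp_pos 1)]; exact h1
    linarith
  set e1 : ℝ := 1 - 1 / Real.exp 1 with he1
  set L : ℝ := Real.log (1 / δ) with hLdef
  have hL0 : 0 < L := by
    rw [hLdef]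
    apply Real.log_pos
    rw [one_div]
    exact (one_lt_inv₀ hδ0).mpr hδ1
  have hm0 : (0:ℝ) < m := by exact_mod_cast hm
  set β : ℝ := L / m with hβdef
  have hβ0 : 0 < β := div_pos hL0 hm0
  have hne : Nonempty {h : Finset V // h ∈ 𝔥} := ⟨⟨h𝔥.choose, h𝔥.choose_spec⟩⟩
  have hT : (0:ℝ) < (Fintype.card (Fin m → {h : Finset V // h ∈ 𝔥}) : ℝ) := by
    have := Fintype.card_pos (α := Fin m → {h : Finset V // h ∈ 𝔥})
    exact_mod_cast this
  obtain ⟨Sstar, hSstar_mem, hSstar⟩ :=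
    Finset.exists_mem_eq_sup' (kSets_ne V k) (centr 𝔥)
  set μ : ℝ := maxCentr V 𝔥 k with hμdef
  have hμeq : μ = centr 𝔥 Sstar := hSstar
  by_cases hμpos : 0 < μ
  · -- main case
    set g : {h : Finset V // h ∈ 𝔥} → ℝ := fun x => fS Sstar x.1 with hg_def
    have hg : ∀ x, g x = 0 ∨ g x = 1 := fun x => fS_zero_or_one _ _
    have hcard𝔥 : (0:ℝ) < (𝔥.card : ℝ) := by exact_mod_cast h𝔥.card_pos
    have hsum : (∑ x, g x) = (Fintype.card {h : Finset V // h ∈ 𝔥} : ℝ) * μ := by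
      have h1 : ∑ x, g x = ∑ h ∈ 𝔥, fS Sstar h := Finset.sum_coe_sort 𝔥 (fS Sstar)
      rw [h1, Fintype.card_coe, hμeq]
      unfold centr
      field_simp
    set ε : ℝ := Real.sqrt (2*μ*β) with hεdef
    have hε0 : 0 ≤ ε := Real.sqrt_nonneg _
    have hch := chernoff_count {h : Finset V // h ∈ 𝔥} m g hg μ ε hsum hμpos hε0
    have hexp : Real.exp (-(m*ε^2/(2*μ))) = δ := by
      rw [hεdef, Real.sq_sqrt (by positivity)]
      have harg : (m:ℝ)*(2*μ*β)/(2*μ) = L := by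
        rw [hβdef]; field_simp
      rw [harg, hLdef, one_div, Real.log_inv, neg_neg, Real.exp_log hδ0]
    -- the good event implies the conclusion
    have hsub : Finset.univ.filter
          (fun H : Fin m → {h : Finset V // h ∈ 𝔥} =>
            ¬ (∑ s, g (H s) ≤ m*(μ - ε))) ⊆
        Finset.univ.filter (fun H : Fin m → {h : Finset V // h ∈ 𝔥} =>
            ∀ S ∈ kSets V k,
              (1 - 1 / Real.exp 1) * maxEmp V (fun s => (H s : Finset V)) k ≤
                  empC (fun s => (H s : Finset V)) S →
                maxCentr V 𝔥 k ≤
                  empC (fun s => (H s : Finset V)) S / (1 - 1 / Real.exp 1) +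
                  Real.sqrt ((Real.log (1 / δ) / m) ^ 2 +
                    2 * empC (fun s => (H s : Finset V)) S * Real.log (1 / δ) /
                      ((1 - 1 / Real.exp 1) * m)) +
                  Real.log (1 / δ) / m) := by
      intro H hH
      rw [Finset.mem_filter] at hH
      rw [Finset.mem_filter]
      refine ⟨Finset.mem_univ _, ?_⟩
      intro S hSk hSemp
      have hHgt : m*(μ - ε) < ∑ s, g (H s) := lt_of_not_ge hH.2
      have hemp : empC (fun s => (H s : Finset V)) Sstar = (∑ s, g (H s))/m := rfl
      have h1 : μ - ε < empC (fun s => (H s : Finset V)) Sstar := by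
        rw [hemp, lt_div_iff₀ hm0]
        linarith
      have h2 : empC (fun s => (H s : Finset V)) Sstar
          ≤ maxEmp V (fun s => (H s : Finset V)) k :=
        Finset.le_sup' (empC (fun s => (H s : Finset V))) hSstar_mem
      have hc0 : 0 ≤ empC (fun s => (H s : Finset V)) S / e1 :=
        div_nonneg (empC_nonneg _ _) he1pos.le
      have h3 : maxEmp V (fun s => (H s : Finset V)) k
          ≤ empC (fun s => (H s : Finset V)) S / e1 := by
        rw [le_div_iff₀ he1pos]
        calc maxEmp V (fun s => (H s : Finset V)) k * e1
            = e1 * maxEmp V (fun s => (H s : Finset V)) k := mul_comm _ _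
          _ ≤ empC (fun s => (H s : Finset V)) S := hSemp
      have h4 : μ ≤ empC (fun s => (H s : Finset V)) S / e1 + Real.sqrt (2*μ*β) := by
        rw [← hεdef]
        linarith
      have h5 := quad_bound μ (empC (fun s => (H s : Finset V)) S / e1) β hc0 hβ0.le h4
      have harg : β^2 + 2*(empC (fun s => (H s : Finset V)) S / e1)*β
          = (L/m)^2 + 2 * empC (fun s => (H s : Finset V)) S * L / (e1*m) := by
        rw [hβdef]
        field_simp
      rw [← hμdef, ← hLdef, ← he1]
      calc μ ≤ empC (fun s => (H s : Finset V)) S / e1 + β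
              + Real.sqrt (β^2 + 2*(empC (fun s => (H s : Finset V)) S / e1)*β) := h5
        _ = empC (fun s => (H s : Finset V)) S / e1
              + Real.sqrt ((L/m)^2 + 2 * empC (fun s => (H s : Finset V)) S * L / (e1*m))
              + L/m := by rw [harg, hβdef]; ring
    -- counting
    have hcards : (Fintype.card (Fin m → {h : Finset V // h ∈ 𝔥}) : ℝ)
        = (Fintype.card {h : Finset V // h ∈ 𝔥} : ℝ)^m := by
      rw [Fintype.card_fun, Fintype.card_fin]
      push_cast
      ring
    have hsplit := Finset.card_filter_add_card_filter_not
      (s := (Finset.univ : Finset (Fin m → {h : Finset V // h ∈ 𝔥})))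
      (p := fun H => ∑ s, g (H s) ≤ m*(μ - ε))
    have hbad : ((Finset.univ.filter
        (fun H : Fin m → {h : Finset V // h ∈ 𝔥} => ∑ s, g (H s) ≤ m*(μ - ε))).card : ℝ)
        ≤ (Fintype.card (Fin m → {h : Finset V // h ∈ 𝔥}) : ℝ) * δ := by
      rw [hcards]
      calc ((Finset.univ.filter
          (fun H : Fin m → {h : Finset V // h ∈ 𝔥} => ∑ s, g (H s) ≤ m*(μ - ε))).card : ℝ)
          ≤ (Fintype.card {h : Finset V // h ∈ 𝔥} : ℝ)^m * Real.exp (-(m*ε^2/(2*μ))) := hch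
        _ = (Fintype.card {h : Finset V // h ∈ 𝔥} : ℝ)^m * δ := by rw [hexp]
    have hgoodcard : ((Finset.univ.filter
          (fun H : Fin m → {h : Finset V // h ∈ 𝔥} =>
            ¬ (∑ s, g (H s) ≤ m*(μ - ε)))).card : ℝ)
        ≤ ((Finset.univ.filter (fun H : Fin m → {h : Finset V // h ∈ 𝔥} =>
            ∀ S ∈ kSets V k,
              (1 - 1 / Real.exp 1) * maxEmp V (fun s => (H s : Finset V)) k ≤
                  empC (fun s => (H s : Finset V)) S →
                maxCentr V 𝔥 k ≤
                  empC (fun s => (H s : Finset V)) S / (1 - 1 / Real.exp 1) +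
                  Real.sqrt ((Real.log (1 / δ) / m) ^ 2 +
                    2 * empC (fun s => (H s : Finset V)) S * Real.log (1 / δ) /
                      ((1 - 1 / Real.exp 1) * m)) +
                  Real.log (1 / δ) / m)).card : ℝ) := by
      exact_mod_cast Nat.cast_le.mpr (Finset.card_le_card hsub)
    rw [le_div_iff₀ hT]
    have hsplit' : ((Finset.univ.filter
        (fun H : Fin m → {h : Finset V // h ∈ 𝔥} => ∑ s, g (H s) ≤ m*(μ - ε))).card : ℝ)
        + ((Finset.univ.filter
          (fun H : Fin m → {h : Finset V // h ∈ 𝔥} =>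
            ¬ (∑ s, g (H s) ≤ m*(μ - ε)))).card : ℝ)
        = (Fintype.card (Fin m → {h : Finset V // h ∈ 𝔥}) : ℝ) := by
      rw [← Finset.card_univ]
      exact_mod_cast hsplit
    linarith
  · -- trivial case: μ ≤ 0
    push_neg at hμpos
    have hall : ∀ H : Fin m → {h : Finset V // h ∈ 𝔥},
        ∀ S ∈ kSets V k,
          (1 - 1 / Real.exp 1) * maxEmp V (fun s => (H s : Finset V)) k ≤
              empC (fun s => (H s : Finset V)) S →
            maxCentr V 𝔥 k ≤
              empC (fun s => (H s : Finset V)) S / (1 - 1 / Real.exp 1) +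
              Real.sqrt ((Real.log (1 / δ) / m) ^ 2 +
                2 * empC (fun s => (H s : Finset V)) S * Real.log (1 / δ) /
                  ((1 - 1 / Real.exp 1) * m)) +
              Real.log (1 / δ) / m := by
      intro H S hSk hSemp
      have h1 : 0 ≤ empC (fun s => (H s : Finset V)) S / (1 - 1 / Real.exp 1) :=
        div_nonneg (empC_nonneg _ _) he1pos.le
      have h2 := Real.sqrt_nonneg ((Real.log (1 / δ) / m) ^ 2 +
                2 * empC (fun s => (H s : Finset V)) S * Real.log (1 / δ) /
                  ((1 - 1 / Real.exp 1) * m))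
      have h3 : 0 ≤ Real.log (1 / δ) / m := by
        rw [← hLdef]; positivity
      rw [← hμdef]
      linarith
    rw [Finset.filter_true_of_mem (fun H _ => hall H), Finset.card_univ, div_self hT.ne']
    linarith
end

section
/- Let ε ∈ (0, 1 − 1/e) and let H be a sample of m hyper-edges. Suppose S ⊆ V with |S| ≤ k, and suppose real numbers η ≥ 0 and ξ ≥ 0 satisfy: (i) SD(F,H) ≤ η; (ii) C(S*) ≤ C_H(S)/(1 − 1/e) + ξ; and (iii) (1 − 1/e)·[ (1 − 1/e − ε)·ξ + η ] ≤ ε·C_H(S). Then C(S) ≥ (1 − 1/e − ε)·C(S*). -/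
open Finset

open scoped Classical

/-- Supremum deviation `SD(F,H) = sup_{S ⊆ V, |S| ≤ k} |C(S) − C_H(S)|`. -/
noncomputable def SD (V : Type*) [Fintype V] [DecidableEq V]
    (𝔥 : Finset (Finset V)) (k : ℕ) {m : ℕ} (H : Fin m → Finset V) : ℝ :=
  (kSets V k).sup' (kSets_ne V k) (fun S => |centr 𝔥 S - empC H S|)

/-- If `SD(F,H) ≤ η`, `C(S*) ≤ C_H(S)/(1 − 1/e) + ξ`, and
`(1 − 1/e)·[(1 − 1/e − ε)·ξ + η] ≤ ε·C_H(S)` for some `η, ξ ≥ 0`, `|S| ≤ k`, and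
`ε ∈ (0, 1 − 1/e)`, then `C(S) ≥ (1 − 1/e − ε)·C(S*)`. -/
theorem stopping_condition_sound (V : Type*) [Fintype V] [DecidableEq V]
    (𝔥 : Finset (Finset V)) (h𝔥 : 𝔥.Nonempty)
    (k m : ℕ) (hk : 1 ≤ k) (hm : 1 ≤ m) (H : Fin m → Finset V)
    (ε : ℝ) (hε0 : 0 < ε) (hε1 : ε < 1 - 1 / Real.exp 1)
    (S : Finset V) (hS : S.card ≤ k)
    (η ξ : ℝ) (hη : 0 ≤ η) (hξ : 0 ≤ ξ)
    (hSD : SD V 𝔥 k H ≤ η)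
    (hopt : maxCentr V 𝔥 k ≤ empC H S / (1 - 1 / Real.exp 1) + ξ)
    (hstop : (1 - 1 / Real.exp 1) * ((1 - 1 / Real.exp 1 - ε) * ξ + η) ≤
      ε * empC H S) :
    (1 - 1 / Real.exp 1 - ε) * maxCentr V 𝔥 k ≤ centr 𝔥 S := by
  set b : ℝ := 1 - 1 / Real.exp 1 with hb
  have he : (1:ℝ) < Real.exp 1 := by
    have := Real.add_one_le_exp (1:ℝ); linarith
  have hbpos : 0 < b := by
    have : 1 / Real.exp 1 < 1 := by
      rw [div_lt_one (by positivity)]; exact he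
    simp only [hb]; linarith
  have hbe : 0 < b - ε := by linarith
  have hSmem : S ∈ kSets V k := by simp [kSets, hS]
  have h1 : |centr 𝔥 S - empC H S| ≤ η :=
    le_trans (Finset.le_sup' (fun T => |centr 𝔥 T - empC H T|) hSmem) hSD
  have h2 : empC H S - η ≤ centr 𝔥 S := by
    have := abs_le.mp h1; linarith [this.2]
  have hopt' : b * maxCentr V 𝔥 k ≤ empC H S + b * ξ := by
    have := mul_le_mul_of_nonneg_left hopt hbpos.le
    rw [mul_add, mul_div_cancel₀ _ (ne_of_gt hbpos)] at this
    linarith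
  have hM : maxCentr V 𝔥 k ≤ (empC H S + b * ξ) / b :=
    (le_div_iff₀' hbpos).mpr hopt'
  have h3 : (b - ε) * maxCentr V 𝔥 k ≤ (b - ε) * ((empC H S + b * ξ) / b) :=
    mul_le_mul_of_nonneg_left hM hbe.le
  have h4 : (b - ε) * ((empC H S + b * ξ) / b) ≤ empC H S - η := by
    rw [mul_div_assoc', div_le_iff₀ hbpos]
    nlinarith [hstop]
  exact (h3.trans h4).trans h2
end

section
/- Suppose every hyper-edge has bounded size: sup_{h ∈ 𝔥} |h| ≤ b for some integer b ≥ 1. Then the VC-dimension of the range space Q_1 satisfies VC(Q_1) ≤ ⌊log₂(2b)⌋. -/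
open Finset

open scoped Classical

/-- `A ⊆ 𝔥` is shattered by the ranges `R_k = {{h ∈ 𝔥 : f_S(h) = 1} : |S| ≤ k}`,
where `f_S(h) = 1` iff `S ∩ h ≠ ∅`: every `B ⊆ A` is of the form `A ∩ r` for some
range `r ∈ R_k`. -/
def shatters {V : Type*} [DecidableEq V] (𝔥 : Finset (Finset V)) (k : ℕ)
    (A : Finset (Finset V)) : Prop :=
  A ⊆ 𝔥 ∧ ∀ B ⊆ A, ∃ S : Finset V, S.card ≤ k ∧
    A.filter (fun h => (S ∩ h).Nonempty) = B

/-- The VC-dimension `VC(Q_k)` of the range space `Q_k = (𝔥, R_k)`: the maximum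
cardinality of a subset of `𝔥` shattered by `R_k`. -/
noncomputable def vcDim {V : Type*} [DecidableEq V]
    (𝔥 : Finset (Finset V)) (k : ℕ) : ℕ :=
  sSup {d : ℕ | ∃ A : Finset (Finset V), shatters 𝔥 k A ∧ A.card = d}

/-- If every hyper-edge has size at most `b` (with `b ≥ 1`), then
`VC(Q_1) ≤ ⌊log₂(2b)⌋` (here `Nat.log 2 (2b) = ⌊log₂(2b)⌋`). -/
theorem vc_one_bound {V : Type*} [Fintype V] [DecidableEq V]
    (𝔥 : Finset (Finset V)) (h𝔥 : 𝔥.Nonempty)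
    (b : ℕ) (hb : 1 ≤ b) (hsize : ∀ h ∈ 𝔥, h.card ≤ b) :
    vcDim 𝔥 1 ≤ Nat.log 2 (2 * b) := by
  have hlog : ∀ d ∈ {d : ℕ | ∃ A : Finset (Finset V), shatters 𝔥 1 A ∧ A.card = d},
      d ≤ Nat.log 2 (2 * b) := by
    rintro d ⟨A, ⟨hAsub, hsh⟩, rfl⟩
    rcases A.eq_empty_or_nonempty with rfl | ⟨h₀, hh₀⟩
    · simp
    · have hspec : ∀ C ∈ (A.erase h₀).powerset,
          ∃ u, u ∈ h₀ ∧ A.filter (fun h => u ∈ h) = insert h₀ C := by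
        intro C hC
        rw [mem_powerset] at hC
        have hBsub : insert h₀ C ⊆ A := by
          intro x hx
          rcases mem_insert.mp hx with rfl | hx
          · exact hh₀
          · exact (mem_erase.mp (hC hx)).2
        obtain ⟨S, hScard, hfil⟩ := hsh (insert h₀ C) hBsub
        have hSne : S.Nonempty := by
          rcases S.eq_empty_or_nonempty with rfl | h
          · exfalso
            have : h₀ ∈ A.filter (fun h => ((∅ : Finset V) ∩ h).Nonempty) :=
              hfil ▸ mem_insert_self _ _
            simp at this
          · exact h
        obtain ⟨u, hu⟩ := hSne
        have hS : S = {u} := by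
          apply Finset.eq_singleton_iff_unique_mem.mpr
          refine ⟨hu, fun v hv => ?_⟩
          by_contra hne
          have : 2 ≤ S.card := Finset.one_lt_card.mpr ⟨v, hv, u, hu, hne⟩
          omega
        subst hS
        have hiff : ∀ h : Finset V, (({u} : Finset V) ∩ h).Nonempty ↔ u ∈ h := by
          intro h
          simp [Finset.Nonempty]
        refine ⟨u, ?_, ?_⟩
        · have : h₀ ∈ A.filter (fun h => (({u} : Finset V) ∩ h).Nonempty) :=
            hfil ▸ mem_insert_self _ _
          simp only [mem_filter] at this
          exact (hiff h₀).mp this.2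
        · rw [← hfil]
          apply Finset.filter_congr
          intro h _
          exact (hiff h).symm
      have hne : h₀.Nonempty := by
        obtain ⟨u, hu, _⟩ := hspec ∅ (by simp)
        exact ⟨u, hu⟩
      obtain ⟨u₀, hu₀⟩ := hne
      set f : Finset (Finset V) → V := fun C =>
        if hc : C ∈ (A.erase h₀).powerset then (hspec C hc).choose else u₀ with hf
      have hcard : (A.erase h₀).powerset.card ≤ h₀.card := by
        apply Finset.card_le_card_of_injOn f
        · intro C hC
          simp only [hf, dif_pos hC]
          exact Finset.mem_coe.mpr (by rw [dif_pos (show C ∈ (A.erase h₀).powerset from hC)]; exact ((hspec C hC).choose_spec).1)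
        · intro C₁ h₁ C₂ h₂ hfe
          have h₁ : C₁ ∈ (A.erase h₀).powerset := h₁
          have h₂ : C₂ ∈ (A.erase h₀).powerset := h₂
          simp only [hf, dif_pos h₁, dif_pos h₂] at hfe
          have e₁ := ((hspec C₁ h₁).choose_spec).2
          have e₂ := ((hspec C₂ h₂).choose_spec).2
          simp only [hfe] at e₁
          have hins : insert h₀ C₁ = insert h₀ C₂ := e₁.symm.trans e₂
          have hn₁ : h₀ ∉ C₁ := fun hx => (mem_erase.mp (mem_powerset.mp h₁ hx)).1 rfl
          have hn₂ : h₀ ∉ C₂ := fun hx => (mem_erase.mp (mem_powerset.mp h₂ hx)).1 rfl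
          have := congrArg (fun s => Finset.erase s h₀) hins
          simpa [Finset.erase_insert hn₁, Finset.erase_insert hn₂] using this
      rw [Finset.card_powerset, Finset.card_erase_of_mem hh₀] at hcard
      have hb' : h₀.card ≤ b := hsize h₀ (hAsub hh₀)
      have hA1 : 1 ≤ A.card := Finset.card_pos.mpr ⟨h₀, hh₀⟩
      have h2 : 2 ^ A.card ≤ 2 * b := by
        have heq : 2 ^ A.card = 2 * 2 ^ (A.card - 1) := by
          rw [← pow_succ']
          congr 1
          omega
        omega
      exact (Nat.le_log_iff_pow_le (by norm_num) (by omega)).mpr h2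
  have h0 : 0 ∈ {d : ℕ | ∃ A : Finset (Finset V), shatters 𝔥 1 A ∧ A.card = d} :=
    ⟨∅, ⟨empty_subset _, fun B hB => ⟨∅, by simp,
      by simpa using (Finset.subset_empty.mp hB).symm⟩⟩, rfl⟩
  exact csSup_le ⟨0, h0⟩ hlog
end
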